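/- Let E ⊂ ℝ^n be nonempty and compact, θ ∈ (0,1], 0 < r < 1 and 0 ≤ t ≤ s ≤ m ≤ n. Then φ_{r,θ}^{s,m}(x) ≤ φ_{r,θ}^{t,m}(x) ≤ r^{(t−s)(1−θ)} φ_{r,θ}^{s,m}(x) for all x ∈ ℝ^n, and consequently C_{r,θ}^{s,m}(E) ≥ C_{r,θ}^{t,m}(E) ≥ r^{(s−t)(1−θ)} C_{r,θ}^{s,m}(E). -/

import Mathlib

open MeasureTheory Metric Set Filter Topology
open scoped ENNReal NNReal

noncomputable section

/-- Euclidean space `ℝ^n`. -/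
abbrev Euc (n : ℕ) := EuclideanSpace ℝ (Fin n)

instance matrixMeasurableSpace (n : ℕ) : MeasurableSpace (Matrix (Fin n) (Fin n) ℝ) :=
  inferInstanceAs (MeasurableSpace (Fin n → Fin n → ℝ))

/-- The restricted covering sum `S_{r,θ}^s(E)`: the infimum of `Σ_i |U_i|^s` over all
countable covers `{U_i}` of `E` with `r ≤ |U_i| ≤ r^θ`, valued in `ℝ≥0∞`. -/
def coverSum (n : ℕ) (E : Set (Euc n)) (θ s r : ℝ) : ℝ≥0∞ :=
  sInf { T : ℝ≥0∞ | ∃ 𝒰 : Set (Set (Euc n)), 𝒰.Countable ∧ E ⊆ ⋃₀ 𝒰 ∧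
    (∀ U ∈ 𝒰, r ≤ diam U ∧ diam U ≤ r ^ θ) ∧
    T = ∑' U : 𝒰, ENNReal.ofReal (diam (U : Set (Euc n)) ^ s) }

/-- Real-valued version of `coverSum`. -/
def Sval (n : ℕ) (E : Set (Euc n)) (θ s r : ℝ) : ℝ := (coverSum n E θ s r).toReal

/-- The quotient `log S_{r,θ}^s(E) / (-log r)`. -/
def Squot (n : ℕ) (E : Set (Euc n)) (θ s r : ℝ) : ℝ :=
  Real.log (Sval n E θ s r) / (-Real.log r)

/-- `N_δ(E)`: the smallest number of sets of diameter at most `δ` needed to cover `E`. -/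
def covNum (n : ℕ) (E : Set (Euc n)) (δ : ℝ) : ℕ :=
  sInf { k : ℕ | ∃ U : Fin k → Set (Euc n), E ⊆ ⋃ i, U i ∧ ∀ i, diam (U i) ≤ δ }

/-- The lower box-counting dimension of `E`. -/
def lowerBoxDim (n : ℕ) (E : Set (Euc n)) : ℝ :=
  liminf (fun δ : ℝ => Real.log (covNum n E δ) / (-Real.log δ)) (𝓝[>] 0)

/-- The upper box-counting dimension of `E`. -/
def upperBoxDim (n : ℕ) (E : Set (Euc n)) : ℝ :=
  limsup (fun δ : ℝ => Real.log (covNum n E δ) / (-Real.log δ)) (𝓝[>] 0)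

/-- The kernel `φ_{r,θ}^{s,m}`. -/
def phiK (n : ℕ) (m s θ r : ℝ) (x : Euc n) : ℝ :=
  if ‖x‖ < r then 1
  else if ‖x‖ < r ^ θ then (r / ‖x‖) ^ s
  else r ^ (θ * (m - s) + s) / ‖x‖ ^ m

/-- The kernel `φ̃_{r,θ}^s`. -/
def phiT (n : ℕ) (s θ r : ℝ) (x : Euc n) : ℝ :=
  if ‖x‖ < r then 1
  else if ‖x‖ ≤ r ^ θ then (r / ‖x‖) ^ s
  else 0

/-- The kernel `φ_r^m(x) = min{1, (r/|x|)^m}`. -/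
def phiB (n : ℕ) (m r : ℝ) (x : Euc n) : ℝ :=
  if ‖x‖ ≤ r then 1 else (r / ‖x‖) ^ m

/-- The energy `∬ φ(x-y) dμ(x)dμ(y)` of a measure with respect to a kernel `φ`. -/
def energy (n : ℕ) (φ : Euc n → ℝ) (μ : Measure (Euc n)) : ℝ :=
  ∫ x, ∫ y, φ (x - y) ∂μ ∂μ

/-- The potential `∫ φ(x-y) dμ(y)` of a measure at `x` with respect to a kernel `φ`. -/
def potential (n : ℕ) (φ : Euc n → ℝ) (μ : Measure (Euc n)) (x : Euc n) : ℝ :=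
  ∫ y, φ (x - y) ∂μ

/-- `μ` is a Borel probability measure supported on `E`. -/
def PMeasOn (n : ℕ) (E : Set (Euc n)) (μ : Measure (Euc n)) : Prop :=
  IsProbabilityMeasure μ ∧ μ Eᶜ = 0

/-- The capacity `C_{r,θ}^{s,m}(E)`: the reciprocal of the infimal energy of Borel
probability measures supported on `E` with respect to the kernel `φ_{r,θ}^{s,m}`. -/
def capacity (n : ℕ) (m s θ r : ℝ) (E : Set (Euc n)) : ℝ :=
  (sInf { e : ℝ | ∃ μ : Measure (Euc n), PMeasOn n E μ ∧ e = energy n (phiK n m s θ r) μ })⁻¹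

/-- The quotient `log C_{r,θ}^{s,m}(E) / (-log r)`. -/
def Cquot (n : ℕ) (m s θ : ℝ) (E : Set (Euc n)) (r : ℝ) : ℝ :=
  Real.log (capacity n m s θ r E) / (-Real.log r)

/-- `d` is the lower intermediate dimension `\underline{dim}_θ E`, i.e. the unique
`s ∈ [0,n]` such that `liminf_{r→0} log S_{r,θ}^s(E) / (-log r) = 0`. -/
def IsLowerInterDim (n : ℕ) (θ : ℝ) (E : Set (Euc n)) (d : ℝ) : Prop :=
  d ∈ Icc (0:ℝ) n ∧ liminf (fun r => Squot n E θ d r) (𝓝[>] 0) = 0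

/-- `d` is the upper intermediate dimension `\overline{dim}_θ E`. -/
def IsUpperInterDim (n : ℕ) (θ : ℝ) (E : Set (Euc n)) (d : ℝ) : Prop :=
  d ∈ Icc (0:ℝ) n ∧ limsup (fun r => Squot n E θ d r) (𝓝[>] 0) = 0

/-- `d` is the lower intermediate dimension profile `\underline{dim}_θ^m E`, i.e. the unique
`s ∈ [0,m]` such that `liminf_{r→0} log C_{r,θ}^{s,m}(E) / (-log r) = s`; for bounded sets the
capacity is that of the closure. -/
def IsLowerDimProfile (n m : ℕ) (θ : ℝ) (E : Set (Euc n)) (d : ℝ) : Prop :=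
  d ∈ Icc (0:ℝ) m ∧ liminf (fun r => Cquot n m d θ (closure E) r) (𝓝[>] 0) = d

/-- `d` is the upper intermediate dimension profile `\overline{dim}_θ^m E`. -/
def IsUpperDimProfile (n m : ℕ) (θ : ℝ) (E : Set (Euc n)) (d : ℝ) : Prop :=
  d ∈ Icc (0:ℝ) m ∧ limsup (fun r => Cquot n m d θ (closure E) r) (𝓝[>] 0) = d

/-- `P` is the matrix of an orthogonal projection of `ℝ^n` onto an `m`-dimensional subspace;
such matrices parametrise the Grassmannian `G(n,m)`. -/
def IsProjMat (n m : ℕ) (P : Matrix (Fin n) (Fin n) ℝ) : Prop :=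
  P.transpose = P ∧ P * P = P ∧ P.rank = m

/-- The orthogonal projection map `π_V` associated to a projection matrix. -/
def projMap (n : ℕ) (P : Matrix (Fin n) (Fin n) ℝ) : Euc n → Euc n :=
  fun x => Matrix.toEuclideanLin P x

/-- `γ` is the natural invariant measure `γ_{n,m}` on the Grassmannian `G(n,m)` (realised as
the space of orthogonal projection matrices of rank `m`): a probability measure supported on
the rank-`m` orthogonal projections and invariant under the action of the orthogonal group. -/
def IsGrassMeasure (n m : ℕ) (γ : Measure (Matrix (Fin n) (Fin n) ℝ)) : Prop :=
  IsProbabilityMeasure γ ∧ γ {P | IsProjMat n m P}ᶜ = 0 ∧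
  ∀ A ∈ Matrix.orthogonalGroup (Fin n) ℝ,
    Measure.map (fun P => A * P * A.transpose) γ = γ

/-! In each of the three ranges of `‖x‖` both kernels are explicit powers of `r` and `‖x‖`, so
`φ^{s,m} ≤ φ^{t,m} ≤ r^{(t-s)(1-θ)} φ^{s,m}` is a comparison of exponents; the ratio
`φ^{t,m} / φ^{s,m}` is largest, equal to `r^{(t-s)(1-θ)}`, from `‖x‖ = r^θ` on. The kernels are
bounded and measurable, so integrating twice against a probability measure keeps these
inequalities; they pass to the infimal energies and, reversed, to their reciprocals. -/

-- An empty index set makes both sides `sInf ∅ = 0`.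
lemma sInf_setOf_le_mul_sInf_setOf {α : Type*} {P : α → Prop} {f g : α → ℝ} {c : ℝ}
    (hc : 0 < c) (hf : ∀ a, P a → 0 ≤ f a) (hfg : ∀ a, P a → f a ≤ c * g a) :
    sInf {e | ∃ a, P a ∧ e = f a} ≤ c * sInf {e | ∃ a, P a ∧ e = g a} := by
  by_cases hP : ∃ a, P a
  · obtain ⟨a, ha⟩ := hP
    have hbdd : BddBelow {e | ∃ a, P a ∧ e = f a} := ⟨0, by rintro _ ⟨b, hb, rfl⟩; exact hf b hb⟩
    rw [← div_le_iff₀' hc]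
    refine le_csInf ⟨g a, a, ha, rfl⟩ ?_
    rintro _ ⟨b, hb, rfl⟩
    rw [div_le_iff₀' hc]
    exact (csInf_le hbdd ⟨b, hb, rfl⟩).trans (hfg b hb)
  · have hempty (h : α → ℝ) : {e | ∃ a, P a ∧ e = h a} = ∅ :=
      eq_empty_of_forall_notMem fun _ he => hP (he.imp fun _ => And.left)
    simp only [hempty, Real.sInf_empty, mul_zero, le_refl]

-- Since `0⁻¹ = 0`, the case `a = 0` relies on `hbc` forcing `b = 0`.
lemma inv_le_inv_of_le_of_le_mul {a b c : ℝ} (ha : 0 ≤ a) (hab : a ≤ b) (hbc : b ≤ c * a) :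
    b⁻¹ ≤ a⁻¹ ∧ c⁻¹ * a⁻¹ ≤ b⁻¹ := by
  rcases ha.eq_or_lt with rfl | ha
  · obtain rfl : b = 0 := le_antisymm (by simpa using hbc) hab
    simp
  · have hb : 0 < b := ha.trans_le hab
    exact ⟨inv_anti₀ ha hab, mul_inv c a ▸ inv_anti₀ hb hbc⟩

section Kernel

variable {n : ℕ} {m s t θ r : ℝ}

lemma phiK_nonneg (hr : 0 < r) (x : Euc n) : 0 ≤ phiK n m s θ r x := by
  unfold phiK
  split_ifs
  · exact zero_le_one
  · positivity
  · positivity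

lemma phiK_le_one (hm : 0 ≤ m) (hs : 0 ≤ s) (hθ : θ ≤ 1) (hr0 : 0 < r) (hr1 : r ≤ 1)
    (x : Euc n) : phiK n m s θ r x ≤ 1 := by
  unfold phiK
  split_ifs with hxr hxθ
  · exact le_rfl
  · rw [not_lt] at hxr
    exact Real.rpow_le_one (by positivity) ((div_le_one (hr0.trans_le hxr)).2 hxr) hs
  · rw [not_lt] at hxθ
    have hx : 0 < ‖x‖ := (Real.rpow_pos_of_pos hr0 θ).trans_le hxθ
    rw [div_le_one (Real.rpow_pos_of_pos hx m)]
    calc r ^ (θ * (m - s) + s) ≤ r ^ (θ * m) :=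
          Real.rpow_le_rpow_of_exponent_ge hr0 hr1 (by nlinarith)
      _ = (r ^ θ) ^ m := Real.rpow_mul hr0.le θ m
      _ ≤ ‖x‖ ^ m := Real.rpow_le_rpow (by positivity) hxθ hm

lemma measurable_phiK : Measurable (phiK n m s θ r) := by
  unfold phiK
  refine Measurable.ite (measurableSet_lt measurable_norm measurable_const) measurable_const ?_
  refine Measurable.ite (measurableSet_lt measurable_norm measurable_const) ?_ ?_ <;> fun_prop

lemma phiK_le_phiK_of_le (hθ : θ ≤ 1) (hr0 : 0 < r) (hr1 : r ≤ 1) (hts : t ≤ s) (x : Euc n) :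
    phiK n m s θ r x ≤ phiK n m t θ r x := by
  unfold phiK
  split_ifs with hxr hxθ
  · exact le_rfl
  · rw [not_lt] at hxr
    have hx : 0 < ‖x‖ := hr0.trans_le hxr
    exact Real.rpow_le_rpow_of_exponent_ge (div_pos hr0 hx) ((div_le_one hx).2 hxr) hts
  · rw [not_lt] at hxθ
    have hx : 0 < ‖x‖ := (Real.rpow_pos_of_pos hr0 θ).trans_le hxθ
    gcongr ?_ / _
    exact Real.rpow_le_rpow_of_exponent_ge hr0 hr1 (by nlinarith)

lemma phiK_le_rpow_mul_phiK (hθ : θ ≤ 1) (hr0 : 0 < r) (hr1 : r ≤ 1) (hts : t ≤ s)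
    (x : Euc n) : phiK n m t θ r x ≤ r ^ ((t - s) * (1 - θ)) * phiK n m s θ r x := by
  unfold phiK
  split_ifs with hxr hxθ
  · rw [mul_one]
    exact Real.one_le_rpow_of_pos_of_le_one_of_nonpos hr0 hr1 (by nlinarith)
  · rw [not_lt] at hxr
    have hx : 0 < ‖x‖ := hr0.trans_le hxr
    have hratio : r ^ (1 - θ) ≤ r / ‖x‖ := by
      rw [Real.rpow_sub hr0, Real.rpow_one]
      exact div_le_div_of_nonneg_left hr0.le hx hxθ.le
    calc (r / ‖x‖) ^ t = (r / ‖x‖) ^ (t - s) * (r / ‖x‖) ^ s := by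
          rw [← Real.rpow_add (div_pos hr0 hx), sub_add_cancel]
      _ ≤ (r ^ (1 - θ)) ^ (t - s) * (r / ‖x‖) ^ s := by
          exact mul_le_mul_of_nonneg_right
            (Real.rpow_le_rpow_of_nonpos (by positivity) hratio (by linarith)) (by positivity)
      _ = r ^ ((t - s) * (1 - θ)) * (r / ‖x‖) ^ s := by
          rw [← Real.rpow_mul hr0.le, mul_comm (1 - θ)]
  · rw [← mul_div_assoc, ← Real.rpow_add hr0]
    ring_nf
    exact le_rfl

end Kernel

section Energy

variable {n : ℕ}

lemma energy_nonneg {φ : Euc n → ℝ} (hφ : ∀ x, 0 ≤ φ x) (μ : Measure (Euc n)) :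
    0 ≤ energy n φ μ :=
  integral_nonneg fun _ => integral_nonneg fun _ => hφ _

lemma energy_const_mul (φ : Euc n → ℝ) (c : ℝ) (μ : Measure (Euc n)) :
    energy n (fun x => c * φ x) μ = c * energy n φ μ := by
  simp only [energy, integral_const_mul]

lemma energy_mono {φ ψ : Euc n → ℝ} {C : ℝ} (hψ : Measurable ψ) (hψC : ∀ x, ψ x ≤ C)
    (hφ : ∀ x, 0 ≤ φ x) (hφψ : ∀ x, φ x ≤ ψ x) (μ : Measure (Euc n)) [IsFiniteMeasure μ] :
    energy n φ μ ≤ energy n ψ μ := by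
  have hψ0 : ∀ x, 0 ≤ ψ x := fun x => (hφ x).trans (hφψ x)
  have hψ_sub : Measurable fun p : Euc n × Euc n => ψ (p.1 - p.2) :=
    hψ.comp (measurable_fst.sub measurable_snd)
  have hint : ∀ x, Integrable (fun y => ψ (x - y)) μ := fun x =>
    Integrable.of_bound (hψ_sub.comp measurable_prodMk_left).aestronglyMeasurable C
      (ae_of_all _ fun y => by rw [Real.norm_of_nonneg (hψ0 _)]; exact hψC _)
  have hpot_int : Integrable (fun x => ∫ y, ψ (x - y) ∂μ) μ :=
    Integrable.of_bound hψ_sub.stronglyMeasurable.integral_prod_right'.aestronglyMeasurable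
      (C * μ.real univ) (ae_of_all _ fun x => norm_integral_le_of_norm_le_const
        (ae_of_all _ fun y => by rw [Real.norm_of_nonneg (hψ0 _)]; exact hψC _))
  exact integral_mono_of_nonneg (ae_of_all _ fun x => integral_nonneg fun y => hφ _) hpot_int
    (ae_of_all _ fun x => integral_mono_of_nonneg (ae_of_all _ fun y => hφ _) (hint x)
      (ae_of_all _ fun y => hφψ _))

lemma sInf_energy_le_mul_sInf_energy (E : Set (Euc n)) {φ ψ : Euc n → ℝ} {c C : ℝ}
    (hc : 0 < c) (hψ : Measurable ψ) (hψC : ∀ x, ψ x ≤ C) (hφ : ∀ x, 0 ≤ φ x)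
    (hφψ : ∀ x, φ x ≤ c * ψ x) :
    sInf {e | ∃ μ, PMeasOn n E μ ∧ e = energy n φ μ} ≤
      c * sInf {e | ∃ μ, PMeasOn n E μ ∧ e = energy n ψ μ} :=
  sInf_setOf_le_mul_sInf_setOf hc (fun μ _ => energy_nonneg hφ μ) fun μ hμ => by
    have := hμ.1
    rw [← energy_const_mul]
    exact energy_mono (hψ.const_mul c) (fun x => mul_le_mul_of_nonneg_left (hψC x) hc.le) hφ
      hφψ μ

end Energy

theorem statement5_general (n m : ℕ)
    (E : Set (Euc n))
    (θ : ℝ) (hθ : θ ∈ Ioc (0:ℝ) 1) (r : ℝ) (hr : r ∈ Ioo (0:ℝ) 1)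
    (s t : ℝ) (ht0 : 0 ≤ t) (hts : t ≤ s) :
    (∀ x : Euc n, phiK n m s θ r x ≤ phiK n m t θ r x ∧
      phiK n m t θ r x ≤ r ^ ((t - s) * (1 - θ)) * phiK n m s θ r x) ∧
    capacity n m t θ r E ≤ capacity n m s θ r E ∧
    r ^ ((s - t) * (1 - θ)) * capacity n m s θ r E ≤ capacity n m t θ r E := by
  obtain ⟨hr0, hr1⟩ := hr
  have hle := phiK_le_phiK_of_le (n := n) (m := m) hθ.2 hr0 hr1.le hts
  have hle_mul := phiK_le_rpow_mul_phiK (n := n) (m := m) hθ.2 hr0 hr1.le hts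
  have hinf_st := sInf_energy_le_mul_sInf_energy E one_pos measurable_phiK
    (phiK_le_one m.cast_nonneg ht0 hθ.2 hr0 hr1.le) (phiK_nonneg hr0) (by simpa using hle)
  have hinf_ts := sInf_energy_le_mul_sInf_energy E (Real.rpow_pos_of_pos hr0 _) measurable_phiK
    (phiK_le_one m.cast_nonneg (ht0.trans hts) hθ.2 hr0 hr1.le) (phiK_nonneg hr0) hle_mul
  have hinf_nonneg := Real.sInf_nonneg (s := {e | ∃ μ, PMeasOn n E μ ∧
    e = energy n (phiK n m s θ r) μ}) fun _ ⟨μ, _, he⟩ => he ▸ energy_nonneg (phiK_nonneg hr0) μ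
  have hexp : r ^ ((s - t) * (1 - θ)) = (r ^ ((t - s) * (1 - θ)))⁻¹ := by
    rw [← Real.rpow_neg hr0.le, ← neg_mul, neg_sub]
  rw [one_mul] at hinf_st
  rw [hexp]
  exact ⟨fun x => ⟨hle x, hle_mul x⟩,
    inv_le_inv_of_le_of_le_mul hinf_nonneg hinf_st hinf_ts⟩

/-- Comparison of the kernels `φ_{r,θ}^{s,m}` and `φ_{r,θ}^{t,m}` for
`t ≤ s`, and the resulting comparison of capacities. -/
theorem statement5 (n m : ℕ) (hm1 : 1 ≤ m) (hmn : m ≤ n)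
    (E : Set (Euc n)) (hE : IsCompact E) (hEne : E.Nonempty)
    (θ : ℝ) (hθ : θ ∈ Ioc (0:ℝ) 1) (r : ℝ) (hr : r ∈ Ioo (0:ℝ) 1)
    (s t : ℝ) (ht0 : 0 ≤ t) (hts : t ≤ s) (hsm : s ≤ m) :
    (∀ x : Euc n, phiK n m s θ r x ≤ phiK n m t θ r x ∧
      phiK n m t θ r x ≤ r ^ ((t - s) * (1 - θ)) * phiK n m s θ r x) ∧
    capacity n m t θ r E ≤ capacity n m s θ r E ∧
    r ^ ((s - t) * (1 - θ)) * capacity n m s θ r E ≤ capacity n m t θ r E :=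
  statement5_general n m E θ hθ r hr s t ht0 hts
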